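/- arXiv:1209.4262 — 3 statements merged into one kernel-verified Lean document; each statement's English description precedes it below -/
import Mathlib

section
/- Let X be a real random variable, φ : ℝ → ℝ a nonincreasing measurable function with φ(X) having the same distribution as X, and f : ℝ → ℝ monotone with f(X) ∈ L²(ℙ) and ℙ(f(X) ≠ E[f(X)]) > 0. Then Var((f(X) + f(φ(X)))/2) < Var(f(X))/2. -/
/-!
Put `Y = f(X)` and `W = f(φ(X))`. As `W` has the law of `Y`,
`Var((Y + W)/2) = (Var Y + Cov(Y, W))/2`, so it suffices that `Cov(Y, W) < 0`. Since `f` and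
`f ∘ φ` vary in opposite directions, `(Y - Y')(W - W') ≤ 0` for an independent copy `(Y', W')`,
and the expectation of this product is `2 Cov(Y, W)`. Strictness comes from a rectangle of positive
product measure on which the product is negative, which exists because `Y` and `W` are not a.s.
constant.
-/

open MeasureTheory ProbabilityTheory

lemma Antivary.setOf_le_subset_or_subset {ι α β : Type*} [LinearOrder α] [LinearOrder β]
    {Y : ι → α} {Z : ι → β} (h : Antivary Y Z) (t : α) (u : β) :
    {ω | Y ω ≤ t} ⊆ {ω | u < Z ω} ∨ {ω | u < Z ω} ⊆ {ω | Y ω ≤ t} := by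
  by_contra! hne
  obtain ⟨⟨ω, hωY, hωZ⟩, ⟨ω', hω'Z, hω'Y⟩⟩ := hne.imp Set.not_subset.1 Set.not_subset.1
  simp only [Set.mem_ofPred_eq, not_lt, not_le] at hωY hωZ hω'Z hω'Y
  exact (h (hωZ.trans_lt hω'Z)).not_gt (hωY.trans_lt hω'Y)

namespace ProbabilityTheory

variable {Ω : Type*} [MeasurableSpace Ω] {μ : Measure Ω} [IsProbabilityMeasure μ] {Y Z : Ω → ℝ}

/-- The mean is such a threshold: otherwise `Y` lies a.e. on one side of its mean, hence is a.e.
equal to it. -/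
lemma exists_measure_le_pos_and_measure_gt_pos (hY : Integrable Y μ)
    (hnd : 0 < μ {ω | Y ω ≠ μ[Y]}) :
    ∃ t, 0 < μ {ω | Y ω ≤ t} ∧ 0 < μ {ω | t < Y ω} := by
  refine ⟨μ[Y], ?_⟩
  by_contra h
  have hside : Y ≤ᵐ[μ] (fun _ ↦ μ[Y]) ∨ (fun _ ↦ μ[Y]) ≤ᵐ[μ] Y := by
    rcases eq_zero_or_pos (μ {ω | Y ω ≤ μ[Y]}) with hle | hle
    · exact .inr (measure_mono_null (fun ω hω ↦ (not_le.1 (show ¬ μ[Y] ≤ Y ω from hω)).le) hle)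
    · exact .inl (measure_mono_null (fun ω hω ↦ by simpa using hω)
        (nonpos_iff_eq_zero.1 (not_lt.1 fun hgt ↦ h ⟨hle, hgt⟩)))
  have hconst : Y =ᵐ[μ] fun _ ↦ μ[Y] := by
    rcases hside with hside | hside
    · exact (integral_eq_iff_of_ae_le hY (integrable_const _) hside).1 (by simp)
    · exact ((integral_eq_iff_of_ae_le (integrable_const _) hY hside).1 (by simp)).symm
  exact hnd.ne' hconst

lemma integral_prod_sub_mul_sub (hY : MemLp Y 2 μ) (hZ : MemLp Z 2 μ) :
    ∫ p, (Y p.1 - Y p.2) * (Z p.1 - Z p.2) ∂(μ.prod μ) = 2 * cov[Y, Z; μ] := by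
  have hY1 := hY.integrable one_le_two
  have hZ1 := hZ.integrable one_le_two
  have hYZ : Integrable (fun ω ↦ Y ω * Z ω) μ := hY.integrable_mul hZ
  have hexpand : (fun p : Ω × Ω ↦ (Y p.1 - Y p.2) * (Z p.1 - Z p.2)) = fun p ↦
      (Y p.1 * Z p.1 + Y p.2 * Z p.2) - (Y p.1 * Z p.2 + Z p.1 * Y p.2) := by
    ext p; ring
  rw [hexpand, integral_sub ((hYZ.comp_fst μ).fun_add (hYZ.comp_snd μ))
      ((hY1.mul_prod hZ1).fun_add (hZ1.mul_prod hY1)),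
    integral_add (hYZ.comp_fst μ) (hYZ.comp_snd μ),
    integral_add (hY1.mul_prod hZ1) (hZ1.mul_prod hY1),
    integral_fun_fst (fun ω ↦ Y ω * Z ω), integral_fun_snd (fun ω ↦ Y ω * Z ω),
    integral_prod_mul Y Z, integral_prod_mul Z Y, covariance_eq_sub hY hZ]
  simp only [probReal_univ, one_smul, Pi.mul_apply]
  ring

/-- Strict Chebyshev inequality. The sides of the rectangle `low ×ˢ high` have positive measure
because `{Y ≤ t}` and `{u < Z}` are nested. -/
lemma covariance_neg_of_antivary (hYZ : Antivary Y Z) (hY : MemLp Y 2 μ) (hZ : MemLp Z 2 μ)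
    (hYnd : 0 < μ {ω | Y ω ≠ μ[Y]}) (hZnd : 0 < μ {ω | Z ω ≠ μ[Z]}) :
    cov[Y, Z; μ] < 0 := by
  obtain ⟨t, hYle, hYgt⟩ :=
    exists_measure_le_pos_and_measure_gt_pos (hY.integrable one_le_two) hYnd
  obtain ⟨u, hZle, hZgt⟩ :=
    exists_measure_le_pos_and_measure_gt_pos (hZ.integrable one_le_two) hZnd
  set low := {ω | Y ω ≤ t} ∩ {ω | u < Z ω} with hlow
  set high := {ω | t < Y ω} ∩ {ω | Z ω ≤ u}
  have hsides : 0 < μ low ∧ 0 < μ high := by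
    rcases hYZ.setOf_le_subset_or_subset t u with h | h
    · refine ⟨by rwa [hlow, Set.inter_eq_left.2 h],
        hZle.trans_le (measure_mono fun ω hω ↦ ⟨?_, hω⟩)⟩
      exact lt_of_not_ge fun (hωY : Y ω ≤ t) ↦ (show u < Z ω from h hωY).not_ge hω
    · refine ⟨by rwa [hlow, Set.inter_eq_right.2 h],
        hYgt.trans_le (measure_mono fun ω hω ↦ ⟨hω, ?_⟩)⟩
      exact le_of_not_gt fun (hωZ : u < Z ω) ↦ (show Y ω ≤ t from h hωZ).not_gt hω
  set D : Ω × Ω → ℝ := fun p ↦ (Y p.1 - Y p.2) * (Z p.1 - Z p.2)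
  have hD_neg : ∀ p ∈ low ×ˢ high, D p < 0 := by
    rintro p ⟨⟨hY1, hZ1⟩, ⟨hY2, hZ2⟩⟩
    simp only [Set.mem_ofPred_eq] at hY1 hZ1 hY2 hZ2
    exact mul_neg_of_neg_of_pos (sub_neg.2 (hY1.trans_lt hY2)) (sub_pos.2 (hZ2.trans_lt hZ1))
  have hD_int : Integrable D (μ.prod μ) :=
    ((hY.comp_fst μ).sub (hY.comp_snd μ)).integrable_mul ((hZ.comp_fst μ).sub (hZ.comp_snd μ))
  have hnegD_pos : 0 < ∫ p, -D p ∂(μ.prod μ) := by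
    refine (integral_pos_iff_support_of_nonneg (fun p ↦ neg_nonneg.2 ?_) hD_int.neg).2 ?_
    · exact hYZ.sub_mul_sub_nonpos p.2 p.1
    · calc 0 < μ low * μ high := ENNReal.mul_pos hsides.1.ne' hsides.2.ne'
        _ = μ.prod μ (low ×ˢ high) := (Measure.prod_prod _ _).symm
        _ ≤ _ := measure_mono fun p hp ↦ neg_ne_zero.2 (hD_neg p hp).ne
  rw [integral_neg, integral_prod_sub_mul_sub hY hZ] at hnegD_pos
  linarith

lemma variance_average_lt_half_of_covariance_neg {W : Ω → ℝ} (hY : MemLp Y 2 μ)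
    (hW : MemLp W 2 μ) (hvar : Var[W; μ] = Var[Y; μ]) (hcov : cov[Y, W; μ] < 0) :
    Var[fun ω ↦ (Y ω + W ω) / 2; μ] < Var[Y; μ] / 2 := by
  have hhalf : (fun ω ↦ (Y ω + W ω) / 2) = fun ω ↦ 2⁻¹ * (Y + W) ω := by
    ext ω; simp only [Pi.add_apply]; ring
  rw [hhalf, variance_const_mul, variance_add hY hW, hvar]
  linarith

end ProbabilityTheory

theorem antithetic_variance_reduction
    {Ω : Type*} [MeasurableSpace Ω] (P : Measure Ω) [IsProbabilityMeasure P]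
    (X : Ω → ℝ) (hX : Measurable X)
    (φ : ℝ → ℝ) (hφm : Measurable φ) (hφ : Antitone φ)
    (hlaw : Measure.map (fun ω => φ (X ω)) P = Measure.map X P)
    (f : ℝ → ℝ) (hfm : Measurable f) (hf : Monotone f ∨ Antitone f)
    (hL2 : MemLp (fun ω => f (X ω)) 2 P)
    (hnd : 0 < P {ω | f (X ω) ≠ ∫ ω', f (X ω') ∂P}) :
    variance (fun ω => (f (X ω) + f (φ (X ω))) / 2) P
      < variance (fun ω => f (X ω)) P / 2 := by
  have hident : IdentDistrib (fun ω ↦ f (φ (X ω))) (fun ω ↦ f (X ω)) P P :=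
    (IdentDistrib.mk (hφm.comp hX).aemeasurable hX.aemeasurable hlaw).comp hfm
  have hL2' : MemLp (fun ω ↦ f (φ (X ω))) 2 P := hident.memLp_iff.2 hL2
  have hnd' : 0 < P {ω | f (φ (X ω)) ≠ ∫ ω', f (φ (X ω')) ∂P} := by
    rw [hident.integral_eq]
    exact hnd.trans_eq (hident.measure_mem_eq (measurableSet_singleton _).compl).symm
  have hanti : Antivary f (f ∘ φ) :=
    hf.elim (fun h ↦ h.antivary (h.comp_antitone hφ)) (fun h ↦ h.antivary (h.comp hφ))
  exact variance_average_lt_half_of_covariance_neg hL2 hL2' hident.variance_eq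
    (covariance_neg_of_antivary (hanti.comp_right X) hL2 hL2' hnd hnd')
end

section
/- Let X₀, …, X_n be independent real-valued random variables and let Φ, Ψ : ℝ^{n+1} → ℝ be bounded Borel functions such that for every index i and every fixed choice of the other coordinates, x_i ↦ Φ(x₀,…,x_i,…,x_n) and x_i ↦ Ψ(x₀,…,x_i,…,x_n) are monotone with the same monotony (which may depend on the fixed coordinates x₀,…,x_{i−1}). Then E[Φ(X₀,…,X_n)Ψ(X₀,…,X_n)] ≥ E[Φ(X₀,…,X_n)]·E[Ψ(X₀,…,X_n)]. -/
/-!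
Induction on the number of coordinates, splitting off the first one. Independence makes the joint
law a product measure, so by Fubini every expectation is an integral in `x₀` of the integral over
the remaining coordinates. For fixed `x₀ = t` the sections of `Φ` and `Ψ` inherit the hypothesis,
so by induction the inner integral of `ΦΨ` dominates `F t * G t`, where `F t` and `G t` are the
inner integrals of `Φ` and `Ψ`. The monotony in `x₀` cannot depend on any earlier coordinate, so
`F` and `G` are both monotone or both antitone, and Chebyshev's integral inequality for the law
of `X₀` finishes the step.
-/

open MeasureTheory ProbabilityTheory

section Integral

variable {α : Type*} [MeasurableSpace α] {μ : Measure α}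

theorem Monovary.integral_mul_integral_le_integral_mul [IsProbabilityMeasure μ] {f g : α → ℝ}
    (hfg : Monovary f g) (hf : Integrable f μ) (hg : Integrable g μ)
    (hfg' : Integrable (fun x => f x * g x) μ) :
    (∫ x, f x ∂μ) * ∫ x, g x ∂μ ≤ ∫ x, f x * g x ∂μ := by
  set A := ∫ x, f x ∂μ
  set B := ∫ x, g x ∂μ
  set AB := ∫ x, f x * g x ∂μ
  have inner (x : α) :
      ∫ y, (f y - f x) * (g y - g x) ∂μ = AB - f x * B - g x * A + f x * g x := by
    have hexp : (fun y => (f y - f x) * (g y - g x))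
        = fun y => f y * g y - f x * g y - g x * f y + f x * g x := by ext; ring
    rw [hexp, integral_add (by fun_prop) (by fun_prop), integral_sub (by fun_prop) (by fun_prop),
      integral_sub hfg' (by fun_prop), integral_const_mul, integral_const_mul]
    simp [A, B, AB]
  have outer : ∫ x, (AB - f x * B - g x * A + f x * g x) ∂μ = 2 * (AB - A * B) := by
    rw [integral_add (by fun_prop) hfg', integral_sub (by fun_prop) (by fun_prop),
      integral_sub (by fun_prop) (by fun_prop), integral_mul_const, integral_mul_const]
    simp only [integral_const, probReal_univ, one_smul]
    ring
  have hdouble : 0 ≤ ∫ x, ∫ y, (f y - f x) * (g y - g x) ∂μ ∂μ :=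
    integral_nonneg fun x => integral_nonneg fun y => hfg.sub_mul_sub_nonneg x y
  simp only [inner, outer] at hdouble
  linarith

theorem integrable_of_abs_le [IsFiniteMeasure μ] {f : α → ℝ} (hf : Measurable f) {C : ℝ}
    (hC : ∀ x, |f x| ≤ C) : Integrable f μ :=
  .of_bound hf.aestronglyMeasurable C (ae_of_all _ hC)

theorem abs_integral_le_of_abs_le [IsProbabilityMeasure μ] {f : α → ℝ} {C : ℝ}
    (hC : ∀ x, |f x| ≤ C) : |∫ x, f x ∂μ| ≤ C := by
  simpa using norm_integral_le_of_norm_le_const (μ := μ) (f := f) (ae_of_all _ hC)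

theorem monotone_integral_of_forall_monotone {γ : Type*} [Preorder γ] {f : γ → α → ℝ}
    (hf : ∀ t, Integrable (f t) μ) (hmono : ∀ x, Monotone (f · x)) :
    Monotone fun t => ∫ x, f t x ∂μ :=
  fun _ _ hst => integral_mono (hf _) (hf _) fun x => hmono x hst

theorem antitone_integral_of_forall_antitone {γ : Type*} [Preorder γ] {f : γ → α → ℝ}
    (hf : ∀ t, Integrable (f t) μ) (hanti : ∀ x, Antitone (f · x)) :
    Antitone fun t => ∫ x, f t x ∂μ :=
  fun _ _ hst => integral_mono (hf _) (hf _) fun x => hanti x hst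

end Integral

section FinCons

variable {β : Type*} [MeasurableSpace β] {n : ℕ}

theorem coe_piFinSuccAbove_zero_symm :
    ⇑(MeasurableEquiv.piFinSuccAbove (fun _ => β) 0).symm
      = fun p : β × (Fin n → β) => (Fin.cons p.1 p.2 : Fin (n + 1) → β) :=
  funext fun p => Fin.insertNth_zero' p.1 p.2

theorem measurable_fin_cons :
    Measurable fun p : β × (Fin n → β) => (Fin.cons p.1 p.2 : Fin (n + 1) → β) := by
  rw [← coe_piFinSuccAbove_zero_symm]
  exact MeasurableEquiv.measurable _

theorem Measurable.comp_fin_cons {γ : Type*} [MeasurableSpace γ] {h : (Fin (n + 1) → β) → γ}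
    (hh : Measurable h) (t : β) : Measurable fun x : Fin n → β => h (Fin.cons t x) :=
  hh.comp (measurable_fin_cons.comp (measurable_const.prodMk measurable_id))

theorem Measurable.integral_fin_cons {h : (Fin (n + 1) → β) → ℝ} (hh : Measurable h)
    (μ : Measure (Fin n → β)) [SFinite μ] :
    Measurable fun t => ∫ x, h (Fin.cons t x) ∂μ :=
  (hh.comp measurable_fin_cons).stronglyMeasurable.integral_prod_right'.measurable

theorem integrable_prod_fin_cons {E : Type*} [NormedAddCommGroup E]
    {μ : Fin (n + 1) → Measure β} [∀ i, SigmaFinite (μ i)] {f : (Fin (n + 1) → β) → E}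
    (hf : Integrable f (Measure.pi μ)) :
    Integrable (fun p : β × (Fin n → β) => f (Fin.cons p.1 p.2))
      ((μ 0).prod (Measure.pi fun j => μ j.succ)) := by
  have hmp := (measurePreserving_piFinSuccAbove μ 0).symm
  simpa only [Function.comp_def, coe_piFinSuccAbove_zero_symm, Fin.zero_succAbove]
    using hmp.integrable_comp_emb (MeasurableEquiv.measurableEmbedding _) |>.2 hf

theorem integral_pi_fin_succ {E : Type*} [NormedAddCommGroup E] [NormedSpace ℝ E]
    (μ : Fin (n + 1) → Measure β) [∀ i, SigmaFinite (μ i)] {f : (Fin (n + 1) → β) → E}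
    (hf : Integrable f (Measure.pi μ)) :
    ∫ x, f x ∂Measure.pi μ
      = ∫ t, ∫ x, f (Fin.cons t x) ∂Measure.pi (fun j => μ j.succ) ∂μ 0 := by
  rw [← integral_prod _ (integrable_prod_fin_cons hf),
    ← (measurePreserving_piFinSuccAbove μ 0).symm.integral_comp']
  simp only [coe_piFinSuccAbove_zero_symm, Fin.zero_succAbove]

theorem MeasureTheory.Integrable.integral_fin_cons {E : Type*} [NormedAddCommGroup E]
    [NormedSpace ℝ E] {μ : Fin (n + 1) → Measure β} [∀ i, SigmaFinite (μ i)]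
    {f : (Fin (n + 1) → β) → E} (hf : Integrable f (Measure.pi μ)) :
    Integrable (fun t => ∫ x, f (Fin.cons t x) ∂Measure.pi (fun j => μ j.succ)) (μ 0) :=
  (integrable_prod_fin_cons hf).integral_prod_left

end FinCons

/-- The sections of `Φ` and `Ψ` in the `i`-th coordinate are both monotone or both antitone, and
which of the two may depend on `x 0, …, x (i - 1)` only. -/
def SharedMonotony {n : ℕ} (Φ Ψ : (Fin n → ℝ) → ℝ) : Prop :=
  ∀ i : Fin n, ∀ x y : Fin n → ℝ, (∀ j, j < i → x j = y j) →
    ((Monotone (fun t => Φ (Function.update x i t)) ∧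
      Monotone (fun t => Ψ (Function.update x i t)) ∧
      Monotone (fun t => Φ (Function.update y i t)) ∧
      Monotone (fun t => Ψ (Function.update y i t))) ∨
     (Antitone (fun t => Φ (Function.update x i t)) ∧
      Antitone (fun t => Ψ (Function.update x i t)) ∧
      Antitone (fun t => Φ (Function.update y i t)) ∧
      Antitone (fun t => Ψ (Function.update y i t))))

namespace SharedMonotony

theorem comp_fin_cons {n : ℕ} {Φ Ψ : (Fin (n + 1) → ℝ) → ℝ} (h : SharedMonotony Φ Ψ) (t : ℝ) :
    SharedMonotony (fun x => Φ (Fin.cons t x)) (fun x => Ψ (Fin.cons t x)) := by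
  intro i x y hxy
  have hagree : ∀ j, j < i.succ →
      (Fin.cons t x : Fin (n + 1) → ℝ) j = (Fin.cons t y : Fin (n + 1) → ℝ) j := by
    refine Fin.cases (fun _ => rfl) fun k hk => ?_
    simpa using hxy k (Fin.succ_lt_succ_iff.mp hk)
  simpa only [Fin.cons_update] using h i.succ _ _ hagree

theorem monotone_or_antitone_fin_cons {n : ℕ} {Φ Ψ : (Fin (n + 1) → ℝ) → ℝ}
    (h : SharedMonotony Φ Ψ) :
    (∀ x, Monotone (fun t => Φ (Fin.cons t x)) ∧ Monotone (fun t => Ψ (Fin.cons t x))) ∨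
    (∀ x, Antitone (fun t => Φ (Fin.cons t x)) ∧ Antitone (fun t => Ψ (Fin.cons t x))) := by
  have h0 (x y : Fin n → ℝ) := h 0 (Fin.cons 0 x) (Fin.cons 0 y) fun j hj => absurd hj j.not_lt_zero
  simp only [Fin.update_cons_zero] at h0
  refine or_iff_not_imp_left.2 fun hmono x => ?_
  obtain ⟨x₀, hx₀⟩ := not_forall.1 hmono
  rcases h0 x₀ x with ⟨h1, h2, -, -⟩ | ⟨-, -, h3, h4⟩
  · exact absurd ⟨h1, h2⟩ hx₀
  · exact ⟨h3, h4⟩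

theorem integral_mul_integral_le_integral_mul {n : ℕ} {Φ Ψ : (Fin n → ℝ) → ℝ}
    (h : SharedMonotony Φ Ψ) (ν : Fin n → Measure ℝ) [∀ i, IsProbabilityMeasure (ν i)]
    (hΦm : Measurable Φ) (hΨm : Measurable Ψ) {C D : ℝ} (hΦb : ∀ x, |Φ x| ≤ C)
    (hΨb : ∀ x, |Ψ x| ≤ D) :
    (∫ x, Φ x ∂Measure.pi ν) * ∫ x, Ψ x ∂Measure.pi ν ≤ ∫ x, Φ x * Ψ x ∂Measure.pi ν := by
  induction n with
  | zero => simp [Measure.pi_of_empty ν]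
  | succ n ih =>
    set ν' := fun j : Fin n => ν j.succ
    let marginal (f : (Fin (n + 1) → ℝ) → ℝ) (t : ℝ) := ∫ x, f (Fin.cons t x) ∂Measure.pi ν'
    have hsection_int {f : (Fin (n + 1) → ℝ) → ℝ} (hf : Measurable f) {B : ℝ}
        (hB : ∀ x, |f x| ≤ B) (t : ℝ) : Integrable (fun x => f (Fin.cons t x)) (Measure.pi ν') :=
      integrable_of_abs_le (hf.comp_fin_cons t) fun x => hB _
    have hmarg_le {f : (Fin (n + 1) → ℝ) → ℝ} {B : ℝ} (hB : ∀ x, |f x| ≤ B) (t : ℝ) :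
        |marginal f t| ≤ B :=
      abs_integral_le_of_abs_le fun x => hB _
    have hΦi := integrable_of_abs_le (μ := Measure.pi ν) hΦm hΦb
    have hΨi := integrable_of_abs_le (μ := Measure.pi ν) hΨm hΨb
    have hΦΨi := hΨi.bdd_mul hΦm.aestronglyMeasurable (ae_of_all _ hΦb)
    have hFGi : Integrable (fun t => marginal Φ t * marginal Ψ t) (ν 0) :=
      hΨi.integral_fin_cons.bdd_mul (hΦm.integral_fin_cons _).aestronglyMeasurable
        (ae_of_all _ (hmarg_le hΦb))
    have hfiber (t : ℝ) : marginal Φ t * marginal Ψ t ≤ marginal (fun x => Φ x * Ψ x) t :=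
      ih (h.comp_fin_cons t) ν' (hΦm.comp_fin_cons t) (hΨm.comp_fin_cons t)
        (fun x => hΦb _) (fun x => hΨb _)
    have hmonovary : Monovary (marginal Φ) (marginal Ψ) := by
      have hΦsec := hsection_int hΦm hΦb
      have hΨsec := hsection_int hΨm hΨb
      rcases h.monotone_or_antitone_fin_cons with hmono | hanti
      · exact (monotone_integral_of_forall_monotone hΦsec fun x => (hmono x).1).monovary
          (monotone_integral_of_forall_monotone hΨsec fun x => (hmono x).2)
      · exact (antitone_integral_of_forall_antitone hΦsec fun x => (hanti x).1).monovary
          (antitone_integral_of_forall_antitone hΨsec fun x => (hanti x).2)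
    rw [integral_pi_fin_succ ν hΦi, integral_pi_fin_succ ν hΨi, integral_pi_fin_succ ν hΦΨi]
    exact (hmonovary.integral_mul_integral_le_integral_mul hΦi.integral_fin_cons
      hΨi.integral_fin_cons hFGi).trans (integral_mono hFGi hΦΨi.integral_fin_cons hfiber)

end SharedMonotony

theorem weak_comonotony_independent
    {Ω : Type*} [MeasurableSpace Ω] (P : Measure Ω) [IsProbabilityMeasure P]
    {n : ℕ} (X : Fin (n + 1) → Ω → ℝ) (hXm : ∀ i, Measurable (X i))
    (hindep : iIndepFun X P)
    (Φ Ψ : (Fin (n + 1) → ℝ) → ℝ) (hΦm : Measurable Φ) (hΨm : Measurable Ψ)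
    (hΦb : ∃ C, ∀ x, |Φ x| ≤ C) (hΨb : ∃ C, ∀ x, |Ψ x| ≤ C)
    (hsec : ∀ i : Fin (n + 1), ∀ x y : Fin (n + 1) → ℝ, (∀ j, j < i → x j = y j) →
      ((Monotone (fun t => Φ (Function.update x i t)) ∧
        Monotone (fun t => Ψ (Function.update x i t)) ∧
        Monotone (fun t => Φ (Function.update y i t)) ∧
        Monotone (fun t => Ψ (Function.update y i t))) ∨
       (Antitone (fun t => Φ (Function.update x i t)) ∧
        Antitone (fun t => Ψ (Function.update x i t)) ∧
        Antitone (fun t => Φ (Function.update y i t)) ∧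
        Antitone (fun t => Ψ (Function.update y i t))))) :
    ∫ ω, Φ (fun i => X i ω) * Ψ (fun i => X i ω) ∂P
      ≥ (∫ ω, Φ (fun i => X i ω) ∂P) * ∫ ω, Ψ (fun i => X i ω) ∂P := by
  obtain ⟨C, hC⟩ := hΦb
  obtain ⟨D, hD⟩ := hΨb
  have (i : Fin (n + 1)) : IsProbabilityMeasure (P.map (X i)) :=
    Measure.isProbabilityMeasure_map (hXm i).aemeasurable
  have hlaw := hindep.map_fun_eq_pi_map fun i => (hXm i).aemeasurable
  have hXvec : AEMeasurable (fun ω i => X i ω) P := (measurable_pi_lambda _ hXm).aemeasurable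
  have key := SharedMonotony.integral_mul_integral_le_integral_mul hsec (fun i => P.map (X i))
    hΦm hΨm hC hD
  rwa [← hlaw, integral_map hXvec hΦm.aestronglyMeasurable,
    integral_map hXvec hΨm.aestronglyMeasurable,
    integral_map (f := fun x => Φ x * Ψ x) hXvec (hΦm.mul hΨm).aestronglyMeasurable] at key
end

section
/- Let f_H(t,s) = (t+s)^{H−1/2} − s^{H−1/2} for t ∈ [0,T], s > 0. If H ∈ [1/2, 1], then |f_H(t',s) − f_H(t,s)| ≤ |t' − t|^{H−1/2} for all t, t' ∈ [0,T], s > 0 (when H > 1/2); and if H ∈ (0, 1/2], then |f_H(t',s) − f_H(t,s)| ≤ C|t' − t|^{1/2−H} s^{2H−1} for all t, t' ∈ [0,T], s > 0, for some constant C. -/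
/-!
For `0 ≤ p ≤ 1` the map `u ↦ u ^ p` is `p`-Hölder with constant `1` on `[0, ∞)`, by subadditivity
of `u ↦ u ^ p`; this is the case `H ≥ 1/2` with `p = H - 1/2`. For `H ≤ 1/2` write `p = 1/2 - H`;
then `x⁻ᵖ - y⁻ᵖ = (yᵖ - xᵖ) / (xᵖ yᵖ)`, whose numerator is at most `|x - y| ^ p` by the same
Hölder bound and whose denominator is at least `s ^ (2p)` when `x, y ≥ s`.
-/

namespace Real

theorem rpow_sub_rpow_le_rpow_sub {a b p : ℝ} (ha : 0 ≤ a) (hab : a ≤ b) (hp : 0 ≤ p)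
    (hp1 : p ≤ 1) : b ^ p - a ^ p ≤ (b - a) ^ p := by
  have h := rpow_add_le_add_rpow (sub_nonneg.2 hab) ha hp hp1
  rw [sub_add_cancel] at h
  linarith

theorem abs_rpow_sub_rpow_le {x y p : ℝ} (hx : 0 ≤ x) (hy : 0 ≤ y) (hp : 0 ≤ p)
    (hp1 : p ≤ 1) : |x ^ p - y ^ p| ≤ |x - y| ^ p := by
  wlog hyx : y ≤ x generalizing x y
  · rw [abs_sub_comm, abs_sub_comm x]
    exact this hy hx (le_of_not_ge hyx)
  rw [abs_of_nonneg (sub_nonneg.2 (rpow_le_rpow hy hyx hp)), abs_of_nonneg (sub_nonneg.2 hyx)]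
  exact rpow_sub_rpow_le_rpow_sub hy hyx hp hp1

theorem abs_rpow_neg_sub_rpow_neg_le {s x y p : ℝ} (hs : 0 < s) (hsx : s ≤ x) (hsy : s ≤ y)
    (hp : 0 ≤ p) (hp1 : p ≤ 1) : |x ^ (-p) - y ^ (-p)| ≤ |x - y| ^ p * s ^ (-2 * p) := by
  have hx : 0 < x := hs.trans_le hsx
  have hy : 0 < y := hs.trans_le hsy
  have hxy : 0 < x ^ p * y ^ p := by positivity
  have hquot : x ^ (-p) - y ^ (-p) = (y ^ p - x ^ p) / (x ^ p * y ^ p) := by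
    rw [rpow_neg hx.le, rpow_neg hy.le]
    field_simp
  rw [hquot, abs_div, abs_of_pos hxy]
  calc |y ^ p - x ^ p| / (x ^ p * y ^ p) ≤ |y - x| ^ p / (s ^ p * s ^ p) := by
        gcongr
        exact abs_rpow_sub_rpow_le hy.le hx.le hp hp1
    _ = |x - y| ^ p * s ^ (-2 * p) := by
        rw [abs_sub_comm, div_eq_mul_inv, ← rpow_add hs, ← rpow_neg hs.le]
        ring_nf

end Real

theorem mandelbrot_van_ness_kernel_holder_general
    (T H : ℝ) :
    ((H ∈ Set.Ioc (1 / 2 : ℝ) 1 →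
      ∀ t ∈ Set.Icc (0 : ℝ) T, ∀ t' ∈ Set.Icc (0 : ℝ) T, ∀ s : ℝ, 0 < s →
        |((t' + s) ^ (H - 1 / 2) - s ^ (H - 1 / 2))
          - ((t + s) ^ (H - 1 / 2) - s ^ (H - 1 / 2))|
          ≤ |t' - t| ^ (H - 1 / 2)) ∧
     (H ∈ Set.Ioc (0 : ℝ) (1 / 2) →
      ∃ C : ℝ, 0 < C ∧ ∀ t ∈ Set.Icc (0 : ℝ) T, ∀ t' ∈ Set.Icc (0 : ℝ) T, ∀ s : ℝ, 0 < s →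
        |((t' + s) ^ (H - 1 / 2) - s ^ (H - 1 / 2))
          - ((t + s) ^ (H - 1 / 2) - s ^ (H - 1 / 2))|
          ≤ C * |t' - t| ^ (1 / 2 - H) * s ^ (2 * H - 1))) := by
  constructor
  · rintro ⟨hH, hH1⟩ t ⟨ht, -⟩ t' ⟨ht', -⟩ s hs
    rw [sub_sub_sub_cancel_right, ← add_sub_add_right_eq_sub t' t s]
    exact Real.abs_rpow_sub_rpow_le (by linarith) (by linarith) (by linarith) (by linarith)
  · rintro ⟨hH, hH1⟩
    refine ⟨1, one_pos, fun t ⟨ht, _⟩ t' ⟨ht', _⟩ s hs => ?_⟩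
    have h := Real.abs_rpow_neg_sub_rpow_neg_le (p := 1 / 2 - H) hs
      (le_add_of_nonneg_left ht') (le_add_of_nonneg_left ht) (by linarith) (by linarith)
    rw [add_sub_add_right_eq_sub, neg_sub, show -2 * (1 / 2 - H) = 2 * H - 1 by ring] at h
    rwa [sub_sub_sub_cancel_right, one_mul]

theorem mandelbrot_van_ness_kernel_holder
    (T H : ℝ) (hT : 0 < T) :
    ((H ∈ Set.Ioc (1 / 2 : ℝ) 1 →
      ∀ t ∈ Set.Icc (0 : ℝ) T, ∀ t' ∈ Set.Icc (0 : ℝ) T, ∀ s : ℝ, 0 < s →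
        |((t' + s) ^ (H - 1 / 2) - s ^ (H - 1 / 2))
          - ((t + s) ^ (H - 1 / 2) - s ^ (H - 1 / 2))|
          ≤ |t' - t| ^ (H - 1 / 2)) ∧
     (H ∈ Set.Ioc (0 : ℝ) (1 / 2) →
      ∃ C : ℝ, 0 < C ∧ ∀ t ∈ Set.Icc (0 : ℝ) T, ∀ t' ∈ Set.Icc (0 : ℝ) T, ∀ s : ℝ, 0 < s →
        |((t' + s) ^ (H - 1 / 2) - s ^ (H - 1 / 2))
          - ((t + s) ^ (H - 1 / 2) - s ^ (H - 1 / 2))|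
          ≤ C * |t' - t| ^ (1 / 2 - H) * s ^ (2 * H - 1))) :=
  mandelbrot_van_ness_kernel_holder_general T H
end
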